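/- Set p_0 = 3/4 and ε = 1/(4√n). For each of the three pairs (c, α) given by: (i) c(p) = 1 − p² − (1−p)² with α = 1 (ℓ2² distance); (ii) c(p) = 2√(p(1−p)) with α = 1/2 (ℓ1 distance); (iii) c(p) = √(1/p − 1) + √(1/(1−p) − 1) with α = 1/2 (separation distance); there exist a constant κ > 0 and an integer n_0 such that for all n ≥ n_0 and every adaptive allocation scheme with budget n, the maximum over the two problem instances P_1 = (Bernoulli(p_0), Bernoulli(p_0−ε)) and P_2 = (Bernoulli(p_0−ε), Bernoulli(p_0)) of max_{i∈{1,2}} E[ |T_i − T̃_i*| ] is at least κ√n, where T̃_i* = n·c_i^{1/α}/(c_1^{1/α} + c_2^{1/α}) is the approx-oracle allocation of the corresponding instance. -/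

import Mathlib

/-!
The two instances differ by `ε = 1/(4√n)` on each arm, so whatever the adaptive scheme, the
Bhattacharyya coefficient of their laws on `{0,1}ⁿ` is `ρⁿ` with `ρ = 1 - O(ε²)`, hence bounded
away from `0`. By Le Cam's inequality the two laws then overlap with mass at least `ρ²ⁿ/2`, so
`T₁` cannot be close to the oracle allocations of both instances. These differ by
`n |w(p₀) - w(p₀ - ε)| / (w(p₀) + w(p₀ - ε))` with `w = c^{1/α}`, and for all three objectives
`w` is a multiple of `p (1 - p)` or of its inverse, so the difference is of order `n ε ≍ √n`.
-/

open Finset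

/-- The arm chosen at round `t` by the adaptive scheme `π` on the outcome
sequence `ω`: `π` sees only the strict prefix of outcomes before round `t`. -/
def chosenArm (π : (t : ℕ) → (Fin t → Bool) → Fin 2) {n : ℕ}
    (ω : Fin n → Bool) (t : Fin n) : Fin 2 :=
  π t.1 (fun s : Fin t.1 => ω ⟨s.1, s.2.trans t.2⟩)

/-- The probability mass of a full outcome sequence `ω ∈ {0,1}^n` under the
two-armed Bernoulli instance with parameters `θ` and the adaptive scheme `π`. -/
def seqProb (θ : Fin 2 → ℝ) (π : (t : ℕ) → (Fin t → Bool) → Fin 2) {n : ℕ}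
    (ω : Fin n → Bool) : ℝ :=
  ∏ t : Fin n, (if ω t then θ (chosenArm π ω t) else 1 - θ (chosenArm π ω t))

/-- `T_i(ω)`: the total number of rounds in which arm `i` is chosen. -/
def pulls (π : (t : ℕ) → (Fin t → Bool) → Fin 2) {n : ℕ}
    (ω : Fin n → Bool) (i : Fin 2) : ℕ :=
  (Finset.univ.filter (fun t => chosenArm π ω t = i)).card

/-- `E[|T_i − target|]` under the instance `θ` with scheme `π` and budget `n`. -/
noncomputable def expDev (θ : Fin 2 → ℝ) (π : (t : ℕ) → (Fin t → Bool) → Fin 2)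
    (n : ℕ) (i : Fin 2) (target : ℝ) : ℝ :=
  ∑ ω : Fin n → Bool, seqProb θ π ω * |(pulls π ω i : ℝ) - target|

/-- With `p₀ = 3/4` and `ε = 1/(4√n)`, the maximum over the two instances
`P₁ = (Ber(p₀), Ber(p₀−ε))`, `P₂ = (Ber(p₀−ε), Ber(p₀))` and the two arms of the
expected deviation `E[|T_i − T̃_i*|]` from the approx-oracle allocation
`T̃_i* = n c_i^{1/α}/(c₁^{1/α}+c₂^{1/α})` for the objective parameter map `c`. -/
noncomputable def worstDev (c : ℝ → ℝ) (α : ℝ) (n : ℕ)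
    (π : (t : ℕ) → (Fin t → Bool) → Fin 2) : ℝ :=
  let p0 : ℝ := 3 / 4
  let ε : ℝ := 1 / (4 * Real.sqrt n)
  let θ1 : Fin 2 → ℝ := ![p0, p0 - ε]
  let θ2 : Fin 2 → ℝ := ![p0 - ε, p0]
  let D : ℝ := c p0 ^ (1 / α) + c (p0 - ε) ^ (1 / α)
  max
    (max (expDev θ1 π n 0 ((n : ℝ) * c p0 ^ (1 / α) / D))
         (expDev θ1 π n 1 ((n : ℝ) * c (p0 - ε) ^ (1 / α) / D)))
    (max (expDev θ2 π n 0 ((n : ℝ) * c (p0 - ε) ^ (1 / α) / D))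
         (expDev θ2 π n 1 ((n : ℝ) * c p0 ^ (1 / α) / D)))

section AdaptiveScheme

variable (π : (t : ℕ) → (Fin t → Bool) → Fin 2)

lemma chosenArm_snoc_castSucc {n : ℕ} (ω : Fin n → Bool) (b : Bool) (t : Fin n) :
    chosenArm π (Fin.snoc ω b) t.castSucc = chosenArm π ω t := by
  unfold chosenArm
  congr 1
  funext s
  simp [Fin.snoc, s.2.trans t.2]

lemma chosenArm_snoc_last {n : ℕ} (ω : Fin n → Bool) (b : Bool) :
    chosenArm π (Fin.snoc ω b) (Fin.last n) = π n ω := by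
  unfold chosenArm
  congr 1
  funext s
  simp [Fin.snoc]

/-- Sum out the last outcome first: the arm it is drawn from depends only on earlier ones. -/
theorem sum_prod_chosenArm (g : Fin 2 → Bool → ℝ) (ρ : ℝ)
    (hg : ∀ i, g i true + g i false = ρ) (n : ℕ) :
    ∑ ω : Fin n → Bool, ∏ t, g (chosenArm π ω t) (ω t) = ρ ^ n := by
  induction n with
  | zero => simp
  | succ n ih =>
    have hsnoc (ω : Fin n → Bool) (b : Bool) :
        ∏ t, g (chosenArm π (Fin.snocEquiv _ (b, ω)) t) (Fin.snocEquiv (fun _ => Bool) (b, ω) t)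
          = (∏ t, g (chosenArm π ω t) (ω t)) * g (π n ω) b := by
      change ∏ t, g (chosenArm π (Fin.snoc ω b) t) ((Fin.snoc ω b : Fin (n + 1) → Bool) t) = _
      rw [Fin.prod_univ_castSucc, chosenArm_snoc_last, Fin.snoc_last]
      simp only [chosenArm_snoc_castSucc, Fin.snoc_castSucc]
    rw [← (Fin.snocEquiv fun _ => Bool).sum_comp, Fintype.sum_prod_type, Finset.sum_comm]
    simp only [hsnoc, Fintype.sum_bool, ← mul_add, hg, ← Finset.sum_mul, ih, pow_succ]

theorem sum_seqProb (θ : Fin 2 → ℝ) (n : ℕ) : ∑ ω : Fin n → Bool, seqProb θ π ω = 1 := by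
  simpa [seqProb] using
    sum_prod_chosenArm π (fun i b => if b then θ i else 1 - θ i) 1 (fun i => by simp) n

variable {π}

theorem seqProb_nonneg {θ : Fin 2 → ℝ} (hθ : ∀ i, θ i ∈ Set.Icc 0 1) {n : ℕ}
    (ω : Fin n → Bool) : 0 ≤ seqProb θ π ω := by
  refine Finset.prod_nonneg fun t _ => ?_
  have := hθ (chosenArm π ω t)
  split_ifs <;> simp only [Set.mem_Icc] at this <;> linarith

/-- The Bhattacharyya coefficient tensorizes despite adaptivity because every arm has the same
coefficient `ρ`. -/
theorem sum_sqrt_seqProb_mul {θ θ' : Fin 2 → ℝ} (hθ : ∀ i, θ i ∈ Set.Icc 0 1)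
    (hθ' : ∀ i, θ' i ∈ Set.Icc 0 1) {ρ : ℝ}
    (hρ : ∀ i, √(θ i * θ' i) + √((1 - θ i) * (1 - θ' i)) = ρ) (n : ℕ) :
    ∑ ω : Fin n → Bool, √(seqProb θ π ω * seqProb θ' π ω) = ρ ^ n := by
  rw [← sum_prod_chosenArm π
    (fun i b => if b then √(θ i * θ' i) else √((1 - θ i) * (1 - θ' i))) ρ (by simpa using hρ)]
  refine Finset.sum_congr rfl fun ω _ => ?_
  rw [seqProb, seqProb, ← Finset.prod_mul_distrib, Real.sqrt_prod]
  · exact Finset.prod_congr rfl fun t _ => by split_ifs <;> rfl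
  · intro t _
    have := hθ (chosenArm π ω t)
    have := hθ' (chosenArm π ω t)
    split_ifs <;> simp only [Set.mem_Icc] at * <;> nlinarith

end AdaptiveScheme

section TwoPoint

variable {ι : Type*} [Fintype ι] {p q : ι → ℝ}

/-- Le Cam's inequality, from Cauchy–Schwarz applied to `√(p q) = √(min p q) √(max p q)`. -/
theorem sq_sum_sqrt_mul_le_two_mul_sum_min (hp : ∀ i, 0 ≤ p i) (hq : ∀ i, 0 ≤ q i)
    (hp1 : ∑ i, p i = 1) (hq1 : ∑ i, q i = 1) :
    (∑ i, √(p i * q i)) ^ 2 ≤ 2 * ∑ i, min (p i) (q i) := by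
  have hmin : ∀ i, 0 ≤ min (p i) (q i) := fun i => le_min (hp i) (hq i)
  have hmax : ∀ i, 0 ≤ max (p i) (q i) := fun i => (hp i).trans (le_max_left _ _)
  have hsum_max : ∑ i, max (p i) (q i) ≤ 2 := by
    have : ∑ i, max (p i) (q i) ≤ ∑ i, (p i + q i) :=
      Finset.sum_le_sum fun i _ => max_le_add_of_nonneg (hp i) (hq i)
    rwa [Finset.sum_add_distrib, hp1, hq1, one_add_one_eq_two] at this
  have hCS : ∑ i, √(p i * q i) ≤ √(∑ i, min (p i) (q i)) * √(∑ i, max (p i) (q i)) := by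
    simp_rw [← min_mul_max (p _) (q _), Real.sqrt_mul (hmin _)]
    exact Real.sum_sqrt_mul_sqrt_le _ hmin hmax
  calc (∑ i, √(p i * q i)) ^ 2
      ≤ (√(∑ i, min (p i) (q i)) * √(∑ i, max (p i) (q i))) ^ 2 := by
        gcongr
    _ = (∑ i, min (p i) (q i)) * ∑ i, max (p i) (q i) := by
        rw [mul_pow, Real.sq_sqrt (Finset.sum_nonneg fun i _ => hmin i),
          Real.sq_sqrt (Finset.sum_nonneg fun i _ => hmax i)]
    _ ≤ 2 * ∑ i, min (p i) (q i) := by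
        rw [mul_comm]
        exact mul_le_mul_of_nonneg_right hsum_max (Finset.sum_nonneg fun i _ => hmin i)

theorem sum_min_mul_abs_sub_le (hp : ∀ i, 0 ≤ p i) (hq : ∀ i, 0 ≤ q i) (X : ι → ℝ) (a b : ℝ) :
    (∑ i, min (p i) (q i)) * |a - b| ≤ ∑ i, p i * |X i - a| + ∑ i, q i * |X i - b| := by
  rw [Finset.sum_mul, ← Finset.sum_add_distrib]
  refine Finset.sum_le_sum fun i _ => ?_
  have hmin : 0 ≤ min (p i) (q i) := le_min (hp i) (hq i)
  calc min (p i) (q i) * |a - b| ≤ min (p i) (q i) * (|X i - a| + |X i - b|) := by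
        gcongr
        exact (abs_sub_le a (X i) b).trans_eq (by rw [abs_sub_comm a])
    _ ≤ p i * |X i - a| + q i * |X i - b| := by
        rw [mul_add]
        gcongr
        exacts [min_le_left _ _, min_le_right _ _]

end TwoPoint

theorem le_expDev_add_expDev {π : (t : ℕ) → (Fin t → Bool) → Fin 2} {θ θ' : Fin 2 → ℝ}
    (hθ : ∀ i, θ i ∈ Set.Icc 0 1) (hθ' : ∀ i, θ' i ∈ Set.Icc 0 1) {ρ : ℝ}
    (hρ : ∀ i, √(θ i * θ' i) + √((1 - θ i) * (1 - θ' i)) = ρ) (n : ℕ) (i : Fin 2) (a b : ℝ) :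
    (ρ ^ n) ^ 2 / 2 * |a - b| ≤ expDev θ π n i a + expDev θ' π n i b := by
  have hp := seqProb_nonneg (π := π) hθ (n := n)
  have hq := seqProb_nonneg (π := π) hθ' (n := n)
  have hoverlap : (ρ ^ n) ^ 2 / 2 ≤ ∑ ω : Fin n → Bool, min (seqProb θ π ω) (seqProb θ' π ω) := by
    have := sq_sum_sqrt_mul_le_two_mul_sum_min hp hq (sum_seqProb π θ n) (sum_seqProb π θ' n)
    rw [sum_sqrt_seqProb_mul hθ hθ' hρ] at this
    linarith
  exact (mul_le_mul_of_nonneg_right hoverlap (abs_nonneg _)).trans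
    (sum_min_mul_abs_sub_le hp hq (fun ω => (pulls π ω i : ℝ)) a b)

/-- Swapping the two arms leaves the per-arm Bhattacharyya coefficient unchanged. -/
theorem le_expDev_add_expDev_swap (π : (t : ℕ) → (Fin t → Bool) → Fin 2) {p q : ℝ}
    (hp : p ∈ Set.Icc 0 1) (hq : q ∈ Set.Icc 0 1) (n : ℕ) (i : Fin 2) (a b : ℝ) :
    ((√(p * q) + √((1 - p) * (1 - q))) ^ n) ^ 2 / 2 * |a - b|
      ≤ expDev ![p, q] π n i a + expDev ![q, p] π n i b := by
  refine le_expDev_add_expDev ?_ ?_ ?_ n i a b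
  · simpa [Fin.forall_fin_two] using ⟨hp, hq⟩
  · simpa [Fin.forall_fin_two] using ⟨hq, hp⟩
  · simp only [Fin.forall_fin_two, Matrix.cons_val_zero, Matrix.cons_val_one]
    rw [mul_comm q, mul_comm (1 - q)]
    exact ⟨trivial, rfl⟩

theorem one_sub_le_bhattacharyya_three_quarters {ε : ℝ} (hε : ε ∈ Set.Icc (0 : ℝ) (1 / 4)) :
    1 - 3 * ε ^ 2 / 4 ≤ √(3 / 4 * (3 / 4 - ε)) + √((1 - 3 / 4) * (1 - (3 / 4 - ε))) := by
  obtain ⟨hε0, hε4⟩ := hε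
  have hu : 3 / 4 - ε / 2 - ε ^ 2 / 4 ≤ √(3 / 4 * (3 / 4 - ε)) := by
    rw [Real.le_sqrt (by nlinarith) (by nlinarith)]
    nlinarith [mul_nonneg (sq_nonneg ε) (sub_nonneg.2 hε4),
      mul_nonneg (mul_nonneg (sq_nonneg ε) hε0) (sub_nonneg.2 hε4)]
  have hv : 1 / 4 + ε / 2 - ε ^ 2 / 2 ≤ √((1 - 3 / 4) * (1 - (3 / 4 - ε))) := by
    rw [Real.le_sqrt (by nlinarith) (by nlinarith)]
    nlinarith [mul_nonneg (pow_nonneg hε0 3) (sub_nonneg.2 hε4)]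
  linarith

theorem four_fifths_le_sq_pow_bhattacharyya_three_quarters {ε : ℝ}
    (hε : ε ∈ Set.Icc (0 : ℝ) (1 / 4)) {n : ℕ} (hnε : n * ε ^ 2 = 1 / 16) :
    4 / 5 ≤ ((√(3 / 4 * (3 / 4 - ε)) + √((1 - 3 / 4) * (1 - (3 / 4 - ε)))) ^ n) ^ 2 := by
  have hε2 : ε ^ 2 ≤ 1 / 16 := by nlinarith [hε.1, hε.2]
  have hbernoulli := one_add_mul_le_pow (a := -(3 * ε ^ 2 / 4)) (by linarith) n
  have hpow := pow_le_pow_left₀ (by linarith) (one_sub_le_bhattacharyya_three_quarters hε) n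
  rw [← sub_eq_add_neg] at hbernoulli
  have : (61 : ℝ) / 64 ≤ (√(3 / 4 * (3 / 4 - ε)) + √((1 - 3 / 4) * (1 - (3 / 4 - ε)))) ^ n := by
    nlinarith
  nlinarith

/-- `n * relGap w₁ w₂` is the distance `|T̃₁* - T̃₂*|` between the two oracle allocations. -/
noncomputable def relGap (a b : ℝ) : ℝ := |a - b| / |a + b|

theorem relGap_mul_left {k : ℝ} (hk : k ≠ 0) (a b : ℝ) : relGap (k * a) (k * b) = relGap a b := by
  rw [relGap, relGap, ← mul_sub, ← mul_add, abs_mul, abs_mul,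
    mul_div_mul_left _ _ (abs_ne_zero.mpr hk)]

theorem relGap_inv (a b : ℝ) : relGap a⁻¹ b⁻¹ = relGap a b := by
  rcases eq_or_ne a 0 with rfl | ha
  · simp [relGap, div_eq_mul_inv, mul_comm]
  rcases eq_or_ne b 0 with rfl | hb
  · simp [relGap, div_eq_mul_inv, mul_comm]
  rw [relGap, relGap, inv_sub_inv ha hb, inv_add_inv ha hb, abs_div, abs_div, abs_sub_comm,
    div_div_div_cancel_right₀ (abs_ne_zero.mpr (mul_ne_zero ha hb)), add_comm]

theorem abs_mul_div_sub_mul_div {n : ℝ} (hn : 0 ≤ n) (a b : ℝ) :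
    |n * a / (a + b) - n * b / (a + b)| = n * relGap a b := by
  rw [← sub_div, ← mul_sub, abs_div, abs_mul, abs_of_nonneg hn, relGap, mul_div_assoc]

theorem half_le_relGap_three_quarters {ε : ℝ} (hε : ε ∈ Set.Icc (0 : ℝ) (1 / 4)) :
    ε / 2 ≤ relGap (3 / 4 * (1 - 3 / 4)) ((3 / 4 - ε) * (1 - (3 / 4 - ε))) := by
  obtain ⟨hε0, hε4⟩ := hε
  have hsum : 0 < 3 / 4 * (1 - 3 / 4) + (3 / 4 - ε) * (1 - (3 / 4 - ε)) := by nlinarith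
  rw [relGap, abs_of_pos hsum, abs_of_nonpos (by nlinarith), le_div_iff₀ hsum]
  nlinarith [mul_nonneg hε0 (sub_nonneg.2 hε4), pow_nonneg hε0 3]

theorem one_div_four_mul_sqrt_mem_Icc {n : ℕ} (hn : 1 ≤ n) :
    1 / (4 * √(n : ℝ)) ∈ Set.Icc (0 : ℝ) (1 / 4) := by
  have hs : 1 ≤ √(n : ℝ) := Real.one_le_sqrt.mpr (by exact_mod_cast hn)
  exact ⟨by positivity, by rw [div_le_div_iff₀ (by positivity) (by norm_num)]; linarith⟩

theorem natCast_mul_one_div_four_mul_sqrt_sq {n : ℕ} (hn : 1 ≤ n) :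
    n * (1 / (4 * √(n : ℝ))) ^ 2 = 1 / 16 := by
  have hn0 : (n : ℝ) ≠ 0 := by positivity
  rw [div_pow, mul_pow, Real.sq_sqrt (Nat.cast_nonneg n)]
  field_simp
  norm_num

theorem natCast_mul_one_div_four_mul_sqrt (n : ℕ) : n * (1 / (4 * √(n : ℝ))) = √n / 4 := by
  rcases Nat.eq_zero_or_pos n with rfl | hn
  · simp
  rw [mul_one_div, div_eq_div_iff (by positivity) (by norm_num)]
  linear_combination (-4 : ℝ) * Real.mul_self_sqrt (Nat.cast_nonneg n)

theorem le_worstDev (c : ℝ → ℝ) (α : ℝ) {n : ℕ} (hn : 1 ≤ n)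
    (π : (t : ℕ) → (Fin t → Bool) → Fin 2) :
    1 / 5 * (n * relGap (c (3 / 4) ^ (1 / α)) (c (3 / 4 - 1 / (4 * √n)) ^ (1 / α)))
      ≤ worstDev c α n π := by
  set ε : ℝ := 1 / (4 * √n)
  have hε := one_div_four_mul_sqrt_mem_Icc hn
  have key := le_expDev_add_expDev_swap π (p := 3 / 4) (q := 3 / 4 - ε)
    ⟨by norm_num, by norm_num⟩ ⟨by linarith [hε.2], by linarith [hε.1]⟩ n 0
    (n * c (3 / 4) ^ (1 / α) / (c (3 / 4) ^ (1 / α) + c (3 / 4 - ε) ^ (1 / α)))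
    (n * c (3 / 4 - ε) ^ (1 / α) / (c (3 / 4) ^ (1 / α) + c (3 / 4 - ε) ^ (1 / α)))
  rw [abs_mul_div_sub_mul_div (Nat.cast_nonneg n)] at key
  have hρ := four_fifths_le_sq_pow_bhattacharyya_three_quarters hε
    (natCast_mul_one_div_four_mul_sqrt_sq hn)
  have hworst : expDev ![3 / 4, 3 / 4 - ε] π n 0
      (n * c (3 / 4) ^ (1 / α) / (c (3 / 4) ^ (1 / α) + c (3 / 4 - ε) ^ (1 / α)))
      ≤ worstDev c α n π := (le_max_left _ _).trans (le_max_left _ _)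
  have hworst' : expDev ![3 / 4 - ε, 3 / 4] π n 0
      (n * c (3 / 4 - ε) ^ (1 / α) / (c (3 / 4) ^ (1 / α) + c (3 / 4 - ε) ^ (1 / α)))
      ≤ worstDev c α n π := (le_max_left _ _).trans (le_max_right _ _)
  have hgap : 0 ≤ n * relGap (c (3 / 4) ^ (1 / α)) (c (3 / 4 - ε) ^ (1 / α)) := by
    unfold relGap; positivity
  nlinarith

/-- All three objectives enter only through the variance `p (1 - p)`, up to a transformation
that preserves the relative gap. -/
theorem exists_sqrt_le_worstDev (c : ℝ → ℝ) (α : ℝ) (f : ℝ → ℝ)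
    (hf : ∀ a b, relGap (f a) (f b) = relGap a b)
    (hc : ∀ p ∈ Set.Ioo (0 : ℝ) 1, c p ^ (1 / α) = f (p * (1 - p))) :
    ∃ κ : ℝ, 0 < κ ∧ ∃ n0 : ℕ, ∀ n : ℕ, n0 ≤ n →
      ∀ π : (t : ℕ) → (Fin t → Bool) → Fin 2, κ * √n ≤ worstDev c α n π := by
  refine ⟨1 / 40, by norm_num, 1, fun n hn π => ?_⟩
  have hε := one_div_four_mul_sqrt_mem_Icc hn
  have hgap := half_le_relGap_three_quarters hε
  rw [← hf, ← hc _ ⟨by norm_num, by norm_num⟩, ← hc _ ⟨by linarith [hε.2], by linarith [hε.1]⟩]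
    at hgap
  calc 1 / 40 * √n = 1 / 5 * (n * (1 / (4 * √(n : ℝ))) / 2) := by
        rw [natCast_mul_one_div_four_mul_sqrt]; ring
    _ ≤ 1 / 5 * (n * relGap (c (3 / 4) ^ (1 / α)) (c (3 / 4 - 1 / (4 * √n)) ^ (1 / α))) := by
        rw [mul_div_assoc]; gcongr
    _ ≤ worstDev c α n π := le_worstDev c α hn π

theorem l2sq_objective_rpow (p : ℝ) :
    (1 - p ^ 2 - (1 - p) ^ 2) ^ (1 / 1 : ℝ) = 2 * (p * (1 - p)) := by
  rw [div_one, Real.rpow_one]; ring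

theorem l1_objective_rpow {p : ℝ} (hp : p ∈ Set.Ioo (0 : ℝ) 1) :
    (2 * √(p * (1 - p))) ^ (1 / (1 / 2) : ℝ) = 4 * (p * (1 - p)) := by
  rw [one_div_one_div, Real.rpow_two, mul_pow, Real.sq_sqrt (by nlinarith [hp.1, hp.2])]
  ring

theorem separation_objective_rpow {p : ℝ} (hp : p ∈ Set.Ioo (0 : ℝ) 1) :
    (√(1 / p - 1) + √(1 / (1 - p) - 1)) ^ (1 / (1 / 2) : ℝ) = (p * (1 - p))⁻¹ := by
  obtain ⟨hp0, hp1⟩ := hp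
  have hq0 : 0 < 1 - p := by linarith
  have hx : 0 ≤ 1 / p - 1 := by rw [sub_nonneg, le_div_iff₀ hp0]; linarith
  have hy : 0 ≤ 1 / (1 - p) - 1 := by rw [sub_nonneg, le_div_iff₀ hq0]; linarith
  have hxy : (1 / p - 1) * (1 / (1 - p) - 1) = 1 := by field_simp; ring
  rw [one_div_one_div, Real.rpow_two, add_sq, Real.sq_sqrt hx, Real.sq_sqrt hy, mul_assoc,
    ← Real.sqrt_mul hx, hxy, Real.sqrt_one]
  field_simp
  ring

/-- `Ω(√n)` tracking lower bounds for the `ℓ2²`, `ℓ1` and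
separation distances: for each of the three parameter maps `c` (with the
corresponding exponent `α`), there are `κ > 0` and `n₀` such that every adaptive
allocation scheme with budget `n ≥ n₀` suffers worst-case expected deviation at
least `κ√n` from the approx-oracle allocation. -/
theorem tracking_lower_bound_sqrt_n :
    (∃ κ : ℝ, 0 < κ ∧ ∃ n0 : ℕ, ∀ n : ℕ, n0 ≤ n →
        ∀ π : (t : ℕ) → (Fin t → Bool) → Fin 2,
          κ * Real.sqrt n ≤ worstDev (fun p => 1 - p ^ 2 - (1 - p) ^ 2) 1 n π) ∧
    (∃ κ : ℝ, 0 < κ ∧ ∃ n0 : ℕ, ∀ n : ℕ, n0 ≤ n →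
        ∀ π : (t : ℕ) → (Fin t → Bool) → Fin 2,
          κ * Real.sqrt n ≤ worstDev (fun p => 2 * Real.sqrt (p * (1 - p))) (1 / 2) n π) ∧
    (∃ κ : ℝ, 0 < κ ∧ ∃ n0 : ℕ, ∀ n : ℕ, n0 ≤ n →
        ∀ π : (t : ℕ) → (Fin t → Bool) → Fin 2,
          κ * Real.sqrt n ≤ worstDev
            (fun p => Real.sqrt (1 / p - 1) + Real.sqrt (1 / (1 - p) - 1)) (1 / 2) n π) :=
  ⟨exists_sqrt_le_worstDev _ _ _ (relGap_mul_left two_ne_zero)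
      fun p _ => l2sq_objective_rpow p,
    exists_sqrt_le_worstDev _ _ _ (relGap_mul_left four_ne_zero)
      fun _ hp => l1_objective_rpow hp,
    exists_sqrt_le_worstDev _ _ _ relGap_inv
      fun _ hp => separation_objective_rpow hp⟩
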